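/- For m ≥ 2, a word w with first letter 0, and any integer r with (w)_m < m^k ≤ r < m^{k+1}: 0 ≤ e_{m;w}(r + m^k) − e_{m;w}(r) ≤ 1, and moreover e_{m;w}(r + m^k) − e_{m;w}(r) = 1 only if the leading base-m digit of r equals m−1. -/
import Mathlib

/-- Number of occurrences of the word `w` as a factor of the word `x`. -/
def occCount (w x : List ℕ) : ℕ :=
  (List.range (x.length + 1)).countP (fun i => decide (w <+: x.drop i))

/-- Base-`m` expansion of `n`, most significant digit first, with `0` written as the digit `0`. -/
def baseExp (m n : ℕ) : List ℕ :=
  if n = 0 then [0] else (Nat.digits m n).reverse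

/-- `e_{m;w}(n)`: number of occurrences of `w` in the base-`m` expansion of `n`. -/
def eCount (m : ℕ) (w : List ℕ) (n : ℕ) : ℕ := occCount w (baseExp m n)

/-- `a_{m;w}(n) = e_{m;w}(n) mod m`. -/
def aSeq (m : ℕ) (w : List ℕ) (n : ℕ) : ℕ := eCount m w n % m

/-- The value `(w)_m` of the digit string `w` in base `m`. -/
def wordVal (m : ℕ) (w : List ℕ) : ℕ := w.foldl (fun acc d => acc * m + d) 0

/-- The finite word `v` is a prefix of the infinite sequence `s`. -/
def IsPrefixSeq (v : List ℕ) (s : ℕ → ℕ) : Prop := ∀ n < v.length, s n = v.getD n 0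

lemma occCount_cons (w : List ℕ) (a : ℕ) (t : List ℕ) :
    occCount w (a :: t) = (if w <+: a :: t then 1 else 0) + occCount w t := by
  unfold occCount
  rw [show (a :: t).length + 1 = (t.length + 1) + 1 from rfl,
    List.range_succ_eq_map, List.countP_cons, List.countP_map]
  simp only [Function.comp_def, List.drop_succ_cons, List.drop_zero,
    decide_eq_true_eq]
  omega

lemma not_prefix_of_head {w : List ℕ} (hne : w ≠ []) (hhead : w.headI = 0)
    {a : ℕ} (ha : a ≠ 0) (t : List ℕ) : ¬ (w <+: a :: t) := by
  obtain ⟨h, tw, rfl⟩ := List.exists_cons_of_ne_nil hne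
  simp only [List.headI] at hhead
  subst hhead
  rw [List.cons_prefix_cons]
  rintro ⟨rfl, -⟩
  exact ha rfl

lemma digits_len_le {m s k : ℕ} (hm : 2 ≤ m) (hs : s < m ^ k) :
    (Nat.digits m s).length ≤ k := by
  rcases eq_or_ne s 0 with rfl | h
  · simp
  · rw [Nat.digits_len m s (by omega) h]
    have := Nat.log_lt_of_lt_pow h hs
    omega

lemma digits_mul_pow_add {m d s k : ℕ} (hm : 2 ≤ m) (hd : 0 < d) (hdm : d < m)
    (hs : s < m ^ k) :
    Nat.digits m (d * m ^ k + s) =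
      (Nat.digits m s ++ List.replicate (k - (Nat.digits m s).length) 0) ++ [d] := by
  have hlen : (Nat.digits m s).length ≤ k := digits_len_le hm hs
  have hdd : Nat.digits m d = [d] := by
    rw [Nat.digits_def' (by omega : 1 < m) hd, Nat.mod_eq_of_lt hdm,
      Nat.div_eq_of_lt hdm, Nat.digits_zero]
  have := Nat.digits_append_zeroes_append_digits (b := m)
    (k := k - (Nat.digits m s).length) (m := d) (n := s) (by omega) hd
  rw [hdd] at this
  rw [this]
  congr 1
  have h2 : (Nat.digits m s).length + (k - (Nat.digits m s).length) = k := by omega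
  rw [h2]; ring

theorem stmt5 (m k r : ℕ) (w : List ℕ) (hm : 2 ≤ m)
    (hw : ∀ d ∈ w, d < m) (hne : w ≠ []) (hhead : w.headI = 0)
    (h1 : wordVal m w < m ^ k) (h2 : m ^ k ≤ r) (h3 : r < m ^ (k + 1)) :
    (eCount m w (r + m ^ k) = eCount m w r ∨
        eCount m w (r + m ^ k) = eCount m w r + 1) ∧
      (eCount m w (r + m ^ k) = eCount m w r + 1 →
        (baseExp m r).headI = m - 1) := by
  have hmk : 0 < m ^ k := pow_pos (by omega) k
  set d := r / m ^ k with hdfn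
  set s := r % m ^ k with hsfn
  have hdm : r = d * m ^ k + s := by
    rw [hdfn, hsfn, mul_comm]; exact (Nat.div_add_mod r (m ^ k)).symm
  have hs : s < m ^ k := Nat.mod_lt _ hmk
  have hd1 : 1 ≤ d := (Nat.one_le_div_iff hmk).mpr h2
  have hdlt : d < m := by
    rw [hdfn]
    apply Nat.div_lt_of_lt_mul
    rwa [← pow_succ]
  have hlen : (Nat.digits m s).length ≤ k := digits_len_le hm hs
  set L := Nat.digits m s ++ List.replicate (k - (Nat.digits m s).length) 0 with hL
  have hbr : baseExp m r = d :: L.reverse := by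
    rw [baseExp, if_neg (by omega), hdm,
      digits_mul_pow_add hm (by omega) hdlt hs, List.reverse_append]
    rfl
  have heCr : eCount m w r = occCount w L.reverse := by
    rw [eCount, hbr, occCount_cons,
      if_neg (not_prefix_of_head hne hhead (by omega) _), zero_add]
  by_cases hcase : d = m - 1
  · -- leading digit is m - 1 : carry case
    have hr2 : r + m ^ k = 1 * m ^ (k + 1) + s := by
      have e1 : (m - 1) * m ^ k = m * m ^ k - m ^ k := Nat.sub_one_mul _ _
      have e2 : m ^ (k + 1) = m * m ^ k := by rw [pow_succ, mul_comm]
      have e3 : m ^ k ≤ m * m ^ k := Nat.le_mul_of_pos_left _ (by omega)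
      rw [hdm, hcase]
      omega
    have hs' : s < m ^ (k + 1) := lt_of_lt_of_le hs (pow_le_pow_right₀ (by omega) (by omega))
    have hrep : List.replicate (k + 1 - (Nat.digits m s).length) (0:ℕ) =
        List.replicate (k - (Nat.digits m s).length) (0:ℕ) ++ [0] := by
      rw [show k + 1 - (Nat.digits m s).length = (k - (Nat.digits m s).length) + 1 by omega,
        List.replicate_succ']
    have hbr2 : baseExp m (r + m ^ k) = 1 :: 0 :: L.reverse := by
      rw [baseExp, if_neg (by omega), hr2,
        digits_mul_pow_add hm (by omega) (by omega) hs', hrep, hL]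
      simp [List.reverse_append]
    have heCr2 : eCount m w (r + m ^ k) =
        (if w <+: 0 :: L.reverse then 1 else 0) + occCount w L.reverse := by
      rw [eCount, hbr2, occCount_cons,
        if_neg (not_prefix_of_head hne hhead (by omega) _), zero_add, occCount_cons]
    constructor
    · by_cases hp : w <+: 0 :: L.reverse
      · right; rw [heCr2, if_pos hp, heCr]; omega
      · left; rw [heCr2, if_neg hp, heCr]; omega
    · intro _
      rw [hbr, hcase]
      rfl
  · -- no carry
    have hr2 : r + m ^ k = (d + 1) * m ^ k + s := by rw [hdm]; ring
    have hbr2 : baseExp m (r + m ^ k) = (d + 1) :: L.reverse := by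
      rw [baseExp, if_neg (by omega), hr2,
        digits_mul_pow_add hm (by omega) (by omega) hs, List.reverse_append]
      rfl
    have heCr2 : eCount m w (r + m ^ k) = occCount w L.reverse := by
      rw [eCount, hbr2, occCount_cons,
        if_neg (not_prefix_of_head hne hhead (by omega) _), zero_add]
    constructor
    · left; rw [heCr, heCr2]
    · intro h
      rw [heCr, heCr2] at h
      omega
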